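/- Let V be a real vector space, ω : V → ℝ a linear functional, and v_1, …, v_ℓ ∈ V elements with ω(v_i) > 0 for every i; let M ⊆ V denote the additive submonoid generated by v_1, …, v_ℓ. Then the image ω(M) = {ω(x) : x ∈ M} is a closed subset of ℝ and is discrete (it has no accumulation point in ℝ). -/

import Mathlib

/-!
ω maps `M` onto the additive submonoid of ℝ generated by the positive numbers `ω (v i)`.
In an element `∑ nᵢ • ω (v i) ≤ R` of it each `nᵢ • ω (v i) ≤ R`, which bounds `nᵢ`, so only
finitely many elements lie below any bound. A subset of ℝ with that property is finite near
every point, hence has no accumulation point, and a set without accumulation points is closed.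
-/

open Set Filter Topology

theorem not_accPt_of_inter_finite {X : Type*} [TopologicalSpace X] [T1Space X] {T U : Set X}
    {x : X} (hU : U ∈ 𝓝 x) (hfin : (T ∩ U).Finite) : ¬ AccPt x (𝓟 T) := by
  intro hx
  have hxU : AccPt x (𝓟 (T ∩ U)) := accPt_iff_frequently.2 <|
    ((accPt_iff_frequently.1 hx).and_eventually hU).mono fun _ hy => ⟨hy.1.1, hy.1.2, hy.2⟩
  exact Set.Infinite.of_accPt hxU hfin

theorem isClosed_and_not_accPt_of_inter_Iic_finite {α : Type*} [TopologicalSpace α]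
    [LinearOrder α] [OrderTopology α] [NoMaxOrder α] {T : Set α}
    (hT : ∀ R, (T ∩ Iic R).Finite) : IsClosed T ∧ ∀ a, ¬ AccPt a (𝓟 T) := by
  have hacc : ∀ a, ¬ AccPt a (𝓟 T) := fun a =>
    let ⟨b, hab⟩ := exists_gt a
    not_accPt_of_inter_finite (Iic_mem_nhds hab) (hT b)
  exact ⟨isClosed_iff_accPt.2 fun a ha => (hacc a ha).elim, hacc⟩

theorem AddSubmonoid.closure_range_inter_Iic_finite {M ι : Type*} [AddCommMonoid M]
    [LinearOrder M] [IsOrderedCancelAddMonoid M] [Archimedean M] [Finite ι] {c : ι → M}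
    (hc : ∀ i, 0 < c i) (R : M) : ((closure (range c) : Set M) ∩ Iic R).Finite := by
  cases nonempty_fintype ι
  choose N hN using fun i => Archimedean.arch R (hc i)
  refine ((Set.Finite.pi' fun i => finite_Iic (N i)).image fun n => ∑ i, n i • c i).subset ?_
  rintro _ ⟨hx, hxR⟩
  obtain ⟨n, rfl⟩ := mem_closure_range_iff_of_fintype.1 hx
  refine ⟨n, fun i => ?_, rfl⟩
  have hle : n i • c i ≤ N i • c i := calc
    n i • c i ≤ ∑ j, n j • c j :=
      Finset.single_le_sum (f := fun j => n j • c j) (fun j _ => nsmul_nonneg (hc j).le _)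
        (Finset.mem_univ i)
    _ ≤ R := hxR
    _ ≤ N i • c i := hN i
  exact (nsmul_le_nsmul_iff_left (hc i)).1 hle

/-- For a linear functional `ω` on a real vector space and elements `v_1, …, v_ℓ`
with `ω (v i) > 0`, the image under `ω` of the additive submonoid generated by the
`v_i` is a closed subset of `ℝ` with no accumulation point. -/
theorem stmt3 {V : Type*} [AddCommGroup V] [Module ℝ V]
    (ω : V →ₗ[ℝ] ℝ) {ℓ : ℕ} (v : Fin ℓ → V) (hv : ∀ i, 0 < ω (v i))
    (M : AddSubmonoid V) (hM : M = AddSubmonoid.closure (Set.range v)) :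
    IsClosed (⇑ω '' (M : Set V)) ∧
      ∀ a : ℝ, ¬ AccPt a (Filter.principal (⇑ω '' (M : Set V))) := by
  have himage : ⇑ω '' (M : Set V) = AddSubmonoid.closure (range (ω ∘ v)) := by
    rw [hM, ← AddSubmonoid.coe_map, AddMonoidHom.map_mclosure, ← range_comp]
  rw [himage]
  exact isClosed_and_not_accPt_of_inter_Iic_finite
    (AddSubmonoid.closure_range_inter_Iic_finite hv)
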